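/- A monomial ideal I of A[ℝ≥0^d] admits a finite m-irreducible decomposition (a finite intersection of m-irreducible monomial ideals) if and only if I is a finite sum of ideals of the form I_{α,ε} = ({X^r : r_i ≥_{ε_i} α_i for all i})R with α ∈ (ℝ≥0 ∪ {∞})^d, ε ∈ {0,1}^d. -/

import Mathlib

/-!
A monomial ideal is determined by its exponent set, an upper set of `ℝ≥0^d`; sums and
intersections of monomial ideals are unions and intersections of exponent sets. `I_{α,ε}` has a
box `∏ᵢ {rᵢ ≥_{εᵢ} αᵢ}` as exponent set and `J_{α,ε}` a cross `⋃ᵢ {rᵢ ≥_{εᵢ} αᵢ}`. The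
m-irreducible monomial ideals are `R` and the `J_{α,ε}`: a cross is irreducible since the join of
two points outside it stays outside, and an irreducible upper set containing `u` contains one of
the half-spaces `{rᵢ ≥ uᵢ}`, whose intersection is `u + ℝ≥0^d`. As every upper set of `ℝ≥0` is
some `{r ≥_ε α}`, distributivity turns finite intersections of crosses into finite unions of
boxes and back.
-/

open scoped NNReal ENNReal

/-- The semigroup ring `R = A[ℝ≥0 ^ d]`. -/
abbrev SemiRng (A : Type*) [CommRing A] (d : ℕ) : Type _ :=
  AddMonoidAlgebra A (Fin d → ℝ≥0)

/-- The monomial `X^r` of `A[ℝ≥0 ^ d]`. -/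
noncomputable def mono (A : Type*) [CommRing A] {d : ℕ} (r : Fin d → ℝ≥0) : SemiRng A d :=
  AddMonoidAlgebra.single r 1

/-- An ideal of `A[ℝ≥0 ^ d]` is a monomial ideal if it is generated by a set of monomials. -/
def IsMonomialIdeal {A : Type*} [CommRing A] {d : ℕ} (I : Ideal (SemiRng A d)) : Prop :=
  ∃ E : Set (Fin d → ℝ≥0), I = Ideal.span (mono A '' E)

/-- The set of (exponent vectors of) monomials contained in an ideal. -/
def monSet (A : Type*) [CommRing A] {d : ℕ} (I : Ideal (SemiRng A d)) :
    Set (Fin d → ℝ≥0) :=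
  {r | mono A r ∈ I}

/-- `geq e r a` means `r ≥_e a`: `r ≥ a` if `e = 0` (false), `r > a` if `e = 1` (true);
no finite `r` satisfies `r ≥_e ∞`. -/
def geq (e : Bool) (r : ℝ≥0) (a : ℝ≥0∞) : Prop :=
  if e then a < (r : ℝ≥0∞) else a ≤ (r : ℝ≥0∞)

/-- The ideal `J_{i,a,e}` generated by the pure powers `X_i^r` with `r ≥_e a`. -/
noncomputable def Jsingle (A : Type*) [CommRing A] {d : ℕ} (i : Fin d) (a : ℝ≥0∞)
    (e : Bool) : Ideal (SemiRng A d) :=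
  Ideal.span {f | ∃ r : ℝ≥0, geq e r a ∧ f = mono A (Pi.single i r)}

/-- The ideal `J_{a,e}` generated by all pure powers `X_i^r` with `r ≥_{e i} a i`. -/
noncomputable def Jideal (A : Type*) [CommRing A] {d : ℕ} (a : Fin d → ℝ≥0∞)
    (e : Fin d → Bool) : Ideal (SemiRng A d) :=
  Ideal.span {f | ∃ (i : Fin d) (r : ℝ≥0), geq (e i) r (a i) ∧ f = mono A (Pi.single i r)}

/-- The ideal `I_{a,e}` generated by all monomials `X^r` with `r i ≥_{e i} a i` for all `i`. -/
noncomputable def Iideal (A : Type*) [CommRing A] {d : ℕ} (a : Fin d → ℝ≥0∞)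
    (e : Fin d → Bool) : Ideal (SemiRng A d) :=
  Ideal.span {f | ∃ r : Fin d → ℝ≥0, (∀ i, geq (e i) (r i) (a i)) ∧ f = mono A r}

/-- A monomial ideal is m-irreducible if whenever it is an intersection of two monomial
ideals, it equals one of them. -/
def MIrred {A : Type*} [CommRing A] {d : ℕ} (I : Ideal (SemiRng A d)) : Prop :=
  ∀ J K : Ideal (SemiRng A d), IsMonomialIdeal J → IsMonomialIdeal K →
    I = J ⊓ K → I = J ∨ I = K

open Set

section MonomialIdeal

variable {A : Type*} [CommRing A] {d : ℕ}

theorem mem_span_mono_iff {E : Set (Fin d → ℝ≥0)} {f : SemiRng A d} :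
    f ∈ Ideal.span (mono A '' E) ↔ ↑f.coeff.support ⊆ (upperClosure E : Set (Fin d → ℝ≥0)) := by
  change f ∈ Ideal.span (AddMonoidAlgebra.of' A _ '' E) ↔ _
  simp only [AddMonoidAlgebra.mem_ideal_span_of'_image, subset_def, SetLike.mem_coe,
    mem_upperClosure, le_iff_exists_add']

theorem mem_span_mono_iff_of_isUpperSet {U : Set (Fin d → ℝ≥0)} (hU : IsUpperSet U)
    {f : SemiRng A d} : f ∈ Ideal.span (mono A '' U) ↔ ↑f.coeff.support ⊆ U := by
  rw [mem_span_mono_iff, hU.upperClosure]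

theorem span_mono_upperClosure (E : Set (Fin d → ℝ≥0)) :
    Ideal.span (mono A '' upperClosure E) = Ideal.span (mono A '' E) := by
  ext f
  rw [mem_span_mono_iff, mem_span_mono_iff, (upperClosure E).upper.upperClosure]

theorem isMonomialIdeal_iff_exists_isUpperSet {I : Ideal (SemiRng A d)} :
    IsMonomialIdeal I ↔ ∃ U, IsUpperSet U ∧ I = Ideal.span (mono A '' U) := by
  refine ⟨fun ⟨E, hE⟩ ↦ ⟨upperClosure E, (upperClosure E).upper, ?_⟩,
    fun ⟨U, _, hU⟩ ↦ ⟨U, hU⟩⟩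
  rw [hE, span_mono_upperClosure]

theorem monSet_span_mono [Nontrivial A] (E : Set (Fin d → ℝ≥0)) :
    monSet A (Ideal.span (mono A '' E)) = upperClosure E := by
  ext r
  simp [monSet, mem_span_mono_iff, mono]

theorem span_mono_injOn_isUpperSet [Nontrivial A] :
    {U : Set (Fin d → ℝ≥0) | IsUpperSet U}.InjOn fun U ↦ Ideal.span (mono A '' U) := by
  intro U hU V hV h
  simpa [monSet_span_mono, hU.upperClosure, hV.upperClosure] using congrArg (monSet A) h

theorem span_mono_inf {U V : Set (Fin d → ℝ≥0)} (hU : IsUpperSet U) (hV : IsUpperSet V) :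
    Ideal.span (mono A '' U) ⊓ Ideal.span (mono A '' V) = Ideal.span (mono A '' (U ∩ V)) := by
  ext f
  simp only [Submodule.mem_inf, mem_span_mono_iff_of_isUpperSet hU,
    mem_span_mono_iff_of_isUpperSet hV, mem_span_mono_iff_of_isUpperSet (hU.inter hV),
    subset_inter_iff]

theorem iInf_span_mono {ι : Sort*} {U : ι → Set (Fin d → ℝ≥0)} (hU : ∀ t, IsUpperSet (U t)) :
    ⨅ t, Ideal.span (mono A '' U t) = Ideal.span (mono A '' ⋂ t, U t) := by
  ext f
  simp only [Submodule.mem_iInf, mem_span_mono_iff_of_isUpperSet (hU _),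
    mem_span_mono_iff_of_isUpperSet (isUpperSet_iInter hU), subset_iInter_iff]

theorem iSup_span_mono {ι : Sort*} (E : ι → Set (Fin d → ℝ≥0)) :
    ⨆ t, Ideal.span (mono A '' E t) = Ideal.span (mono A '' ⋃ t, E t) := by
  rw [image_iUnion, Ideal.span_iUnion]

end MonomialIdeal

theorem isUpperSet_setOf_geq (e : Bool) (a : ℝ≥0∞) : IsUpperSet {r | geq e r a} := by
  intro r s hrs hr
  have : (r : ℝ≥0∞) ≤ s := ENNReal.coe_le_coe.mpr hrs
  cases e
  · exact (hr : a ≤ r).trans this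
  · exact (hr : a < r).trans_le this

/-- Here `a` is the infimum of `C` in `ℝ≥0∞` (`∞` when `C = ∅`), and `e` records whether the
infimum is missed by `C`. -/
theorem exists_geq_of_isUpperSet {C : Set ℝ≥0} (hC : IsUpperSet C) :
    ∃ a e, C = {r | geq e r a} := by
  set a : ℝ≥0∞ := ⨅ r ∈ C, (r : ℝ≥0∞)
  have ha : ∀ r ∈ C, a ≤ r := fun r hr ↦ biInf_le _ hr
  have hlt : ∀ r : ℝ≥0, a < r → r ∈ C := by
    intro r hr
    obtain ⟨s, hs, hsr⟩ : ∃ s ∈ C, (s : ℝ≥0∞) < r := by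
      simpa only [a, iInf_lt_iff, exists_prop] using hr
    exact hC (ENNReal.coe_le_coe.mp hsr.le) hs
  by_cases haC : ∃ m ∈ C, (m : ℝ≥0∞) = a
  · obtain ⟨m, hm, hma⟩ := haC
    refine ⟨a, false, Set.ext fun r ↦ ⟨ha r, fun hr ↦ hC ?_ hm⟩⟩
    exact ENNReal.coe_le_coe.mp (hma ▸ hr)
  · push Not at haC
    exact ⟨a, true, Set.ext fun r ↦ ⟨fun hr ↦ (ha r hr).lt_of_ne (haC r hr).symm, hlt r⟩⟩

theorem Pi.single_le_iff {ι M : Type*} [DecidableEq ι] [AddCommMonoid M] [PartialOrder M]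
    [CanonicallyOrderedAdd M] {i : ι} {r : M} {v : ι → M} : Pi.single i r ≤ v ↔ r ≤ v i := by
  simp [Pi.single, update_le_iff]

theorem iInter_preimage_eval_eq_pi {τ ι β : Type*} (φ : τ → ι) (C : τ → ι → Set β) :
    ⋂ t, Function.eval (φ t) ⁻¹' C t (φ t) = univ.pi fun i ↦ ⋂ (t) (_ : φ t = i), C t i := by
  ext v
  simp only [mem_iInter, mem_preimage, Function.eval, mem_univ_pi]
  exact ⟨fun h i t hti ↦ hti ▸ h t, fun h t ↦ h (φ t) t rfl⟩

theorem iUnion_preimage_eval_eq_iUnion {τ ι β : Type*} (φ : τ → ι) (C : τ → ι → Set β) :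
    ⋃ t, Function.eval (φ t) ⁻¹' C t (φ t) =
      ⋃ i, Function.eval i ⁻¹' ⋃ (t) (_ : φ t = i), C t i := by
  ext v
  simp only [mem_iUnion, mem_preimage, Function.eval, exists_prop]
  exact ⟨fun ⟨t, ht⟩ ↦ ⟨φ t, t, rfl, ht⟩, fun ⟨_, t, hti, ht⟩ ↦ ⟨t, hti ▸ ht⟩⟩

section InterIrred

variable {α : Type*}

def InterIrred [LE α] (U : Set α) : Prop :=
  ∀ V W, IsUpperSet V → IsUpperSet W → U = V ∩ W → U = V ∨ U = W

theorem InterIrred.of_sup_mem [SemilatticeSup α] {U : Set α}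
    (hU : ∀ u w, u ⊔ w ∈ U → u ∈ U ∨ w ∈ U) : InterIrred U := by
  intro V W hV hW hUVW
  by_contra! hne
  obtain ⟨u, huV, hu⟩ := exists_of_ssubset
    ((hUVW.trans_subset inter_subset_left).ssubset_of_ne hne.1)
  obtain ⟨w, hwW, hw⟩ := exists_of_ssubset
    ((hUVW.trans_subset inter_subset_right).ssubset_of_ne hne.2)
  have huw : u ⊔ w ∈ U := hUVW ▸ ⟨hV le_sup_left huV, hW le_sup_right hwW⟩
  exact (hU u w huw).elim hu hw

theorem InterIrred.eq_univ_or_exists_subset [LE α] {U : Set α} (hirr : InterIrred U)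
    (hU : IsUpperSet U) {ι : Type*} {B : ι → Set α} (hB : ∀ i, IsUpperSet (B i)) (s : Finset ι)
    (hsU : ⋂ i ∈ s, B i ⊆ U) : U = univ ∨ ∃ i ∈ s, B i ⊆ U := by
  classical
  induction s using Finset.induction_on with
  | empty => simpa using hsU
  | insert j s _ ih =>
    rw [Finset.set_biInter_insert] at hsU
    have hsplit : U = (U ∪ B j) ∩ (U ∪ ⋂ i ∈ s, B i) := by
      rw [← union_inter_distrib_left, union_eq_left.mpr hsU]
    rcases hirr _ _ (hU.union (hB j)) (hU.union (isUpperSet_iInter₂ fun i _ ↦ hB i)) hsplit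
      with h | h
    · exact Or.inr ⟨j, Finset.mem_insert_self j s, union_eq_left.mp h.symm⟩
    · obtain h | ⟨i, hi, hiU⟩ := ih (union_eq_left.mp h.symm)
      · exact Or.inl h
      · exact Or.inr ⟨i, Finset.mem_insert_of_mem hi, hiU⟩

end InterIrred

section BoxCross

variable {d : ℕ}

/-- `box a e` and `cross a e` are the exponent sets of `Iideal A a e` and `Jideal A a e`. -/
def box (a : Fin d → ℝ≥0∞) (e : Fin d → Bool) : Set (Fin d → ℝ≥0) :=
  univ.pi fun i ↦ {r | geq (e i) r (a i)}

def cross (a : Fin d → ℝ≥0∞) (e : Fin d → Bool) : Set (Fin d → ℝ≥0) :=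
  ⋃ i, Function.eval i ⁻¹' {r | geq (e i) r (a i)}

theorem isUpperSet_cross (a : Fin d → ℝ≥0∞) (e : Fin d → Bool) : IsUpperSet (cross a e) :=
  isUpperSet_iUnion fun i ↦ (isUpperSet_setOf_geq _ _).preimage (Function.monotone_eval i)

theorem exists_box_eq_pi {C : Fin d → Set ℝ≥0} (hC : ∀ i, IsUpperSet (C i)) :
    ∃ a e, box a e = univ.pi C := by
  choose a e hae using fun i ↦ exists_geq_of_isUpperSet (hC i)
  exact ⟨a, e, by simp only [box, ← hae]⟩

theorem exists_cross_eq_iUnion_preimage {C : Fin d → Set ℝ≥0} (hC : ∀ i, IsUpperSet (C i)) :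
    ∃ a e, cross a e = ⋃ i, Function.eval i ⁻¹' C i := by
  choose a e hae using fun i ↦ exists_geq_of_isUpperSet (hC i)
  exact ⟨a, e, by simp only [cross, ← hae]⟩

theorem upperClosure_singles_eq_cross (a : Fin d → ℝ≥0∞) (e : Fin d → Bool) :
    (upperClosure {v | ∃ i r, geq (e i) r (a i) ∧ v = Pi.single i r} : Set (Fin d → ℝ≥0)) =
      cross a e := by
  ext v
  simp only [SetLike.mem_coe, mem_upperClosure, cross, mem_iUnion, mem_preimage, mem_ofPred_eq]
  constructor
  · rintro ⟨_, ⟨i, r, hr, rfl⟩, hv⟩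
    exact ⟨i, isUpperSet_setOf_geq _ _ ((Pi.single_le_iff (i := i)).mp hv) hr⟩
  · rintro ⟨i, hi⟩
    exact ⟨_, ⟨i, v i, hi, rfl⟩, Pi.single_le_iff.mpr le_rfl⟩

theorem exists_iInter_cross_eq_iUnion_box {τ : Type*} [Finite τ] (a : τ → Fin d → ℝ≥0∞)
    (e : τ → Fin d → Bool) :
    ∃ (m : ℕ) (b : Fin m → Fin d → ℝ≥0∞) (f : Fin m → Fin d → Bool),
      ⋂ t, cross (a t) (e t) = ⋃ s, box (b s) (f s) := by
  have hbox (φ : τ → Fin d) : ∃ b f,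
      box b f = ⋂ t, Function.eval (φ t) ⁻¹' {r | geq (e t (φ t)) r (a t (φ t))} := by
    rw [iInter_preimage_eval_eq_pi φ fun t i ↦ {r | geq (e t i) r (a t i)}]
    exact exists_box_eq_pi fun i ↦ isUpperSet_iInter₂ fun t _ ↦ isUpperSet_setOf_geq _ _
  choose b f hbf using hbox
  let σ := (Finite.equivFin (τ → Fin d)).symm
  refine ⟨_, b ∘ σ, f ∘ σ, ?_⟩
  calc ⋂ t, cross (a t) (e t) = ⋃ φ, box (b φ) (f φ) := by
        simpa only [cross, hbf, iSup_eq_iUnion, iInf_eq_iInter] using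
          iInf_iSup_eq (f := fun t i ↦ Function.eval i ⁻¹' {r | geq (e t i) r (a t i)})
    _ = ⋃ s, box (b (σ s)) (f (σ s)) := (σ.surjective.iUnion_comp fun φ ↦ box (b φ) (f φ)).symm

theorem exists_iUnion_box_eq_iInter_cross {τ : Type*} [Finite τ] (a : τ → Fin d → ℝ≥0∞)
    (e : τ → Fin d → Bool) :
    ∃ (m : ℕ) (b : Fin m → Fin d → ℝ≥0∞) (f : Fin m → Fin d → Bool),
      ⋃ t, box (a t) (e t) = ⋂ s, cross (b s) (f s) := by
  have hcross (φ : τ → Fin d) : ∃ b f,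
      cross b f = ⋃ t, Function.eval (φ t) ⁻¹' {r | geq (e t (φ t)) r (a t (φ t))} := by
    rw [iUnion_preimage_eval_eq_iUnion φ fun t i ↦ {r | geq (e t i) r (a t i)}]
    exact exists_cross_eq_iUnion_preimage fun i ↦
      isUpperSet_iUnion₂ fun t _ ↦ isUpperSet_setOf_geq _ _
  choose b f hbf using hcross
  let σ := (Finite.equivFin (τ → Fin d)).symm
  refine ⟨_, b ∘ σ, f ∘ σ, ?_⟩
  calc ⋃ t, box (a t) (e t) = ⋂ φ, cross (b φ) (f φ) := by
        simpa only [box, univ_pi_eq_iInter, hbf, iSup_eq_iUnion, iInf_eq_iInter] using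
          iSup_iInf_eq (f := fun t i ↦ Function.eval i ⁻¹' {r | geq (e t i) r (a t i)})
    _ = ⋂ s, cross (b (σ s)) (f (σ s)) :=
        (σ.surjective.iInter_comp fun φ ↦ cross (b φ) (f φ)).symm

theorem sup_mem_cross {a : Fin d → ℝ≥0∞} {e : Fin d → Bool} {u w : Fin d → ℝ≥0}
    (h : u ⊔ w ∈ cross a e) : u ∈ cross a e ∨ w ∈ cross a e := by
  obtain ⟨i, hi⟩ := mem_iUnion.mp h
  rcases le_total (u i) (w i) with hle | hle
  · exact Or.inr (mem_iUnion.mpr ⟨i, by simpa [sup_eq_right.mpr hle] using hi⟩)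
  · exact Or.inl (mem_iUnion.mpr ⟨i, by simpa [sup_eq_left.mpr hle] using hi⟩)

theorem interIrred_cross (a : Fin d → ℝ≥0∞) (e : Fin d → Bool) : InterIrred (cross a e) :=
  InterIrred.of_sup_mem fun _ _ ↦ sup_mem_cross

/-- `univ` has to be listed separately: it is a cross only when `d > 0`. -/
theorem InterIrred.eq_univ_or_eq_cross {U : Set (Fin d → ℝ≥0)} (hirr : InterIrred U)
    (hU : IsUpperSet U) : U = univ ∨ ∃ a e, U = cross a e := by
  refine or_iff_not_imp_left.mpr fun hne ↦ ?_
  set C : Fin d → Set ℝ≥0 := fun i ↦ {s | ∀ w : Fin d → ℝ≥0, s ≤ w i → w ∈ U}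
  obtain ⟨a, e, hae⟩ := exists_cross_eq_iUnion_preimage (C := C) fun i _ _ hst hs w hw ↦
    hs w (hst.trans hw)
  refine ⟨a, e, hae ▸ Subset.antisymm (fun u hu ↦ ?_) ?_⟩
  · have hIci : ⋂ i ∈ Finset.univ, {w : Fin d → ℝ≥0 | u i ≤ w i} ⊆ U := fun w hw ↦
      hU (fun i ↦ mem_iInter₂.mp hw i (Finset.mem_univ i)) hu
    obtain h | ⟨i, -, hi⟩ := hirr.eq_univ_or_exists_subset hU
      (fun i ↦ (isUpperSet_Ici (u i)).preimage (Function.monotone_eval i)) _ hIci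
    · exact absurd h hne
    · exact mem_iUnion.mpr ⟨i, fun w hw ↦ hi hw⟩
  · exact iUnion_subset fun i v hv ↦ hv v le_rfl

theorem exists_iInter_eq_iUnion_box {τ : Type*} [Finite τ] {U : τ → Set (Fin d → ℝ≥0)}
    (hU : ∀ t, U t = univ ∨ ∃ a e, U t = cross a e) :
    ∃ (m : ℕ) (b : Fin m → Fin d → ℝ≥0∞) (f : Fin m → Fin d → Bool),
      ⋂ t, U t = ⋃ s, box (b s) (f s) := by
  choose a e hae using fun t : {t // U t ≠ univ} ↦ (hU t).resolve_left t.2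
  have hdrop : ⋂ t, U t = ⋂ t : {t // U t ≠ univ}, cross (a t) (e t) := by
    rw [← iInter_congr hae, iInter_subtype]
    refine iInter_congr fun t ↦ ?_
    by_cases ht : U t = univ <;> simp [ht]
  rw [hdrop]
  exact exists_iInter_cross_eq_iUnion_box a e

end BoxCross

section Ideals

variable {A : Type*} [CommRing A] {d : ℕ}

theorem Iideal_eq_span_box (a : Fin d → ℝ≥0∞) (e : Fin d → Bool) :
    Iideal A a e = Ideal.span (mono A '' box a e) := by
  simp only [Iideal, box, Set.image, mem_pi, mem_univ, forall_const, mem_ofPred_eq, eq_comm]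

theorem Jideal_eq_span_cross (a : Fin d → ℝ≥0∞) (e : Fin d → Bool) :
    Jideal A a e = Ideal.span (mono A '' cross a e) := by
  rw [← upperClosure_singles_eq_cross, span_mono_upperClosure, Jideal]
  congr 1
  ext f
  constructor
  · rintro ⟨i, r, hr, rfl⟩
    exact ⟨_, ⟨i, r, hr, rfl⟩, rfl⟩
  · rintro ⟨_, ⟨i, r, hr, rfl⟩, rfl⟩
    exact ⟨i, r, hr, rfl⟩

theorem mIrred_span_mono_iff [Nontrivial A] {U : Set (Fin d → ℝ≥0)} (hU : IsUpperSet U) :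
    MIrred (Ideal.span (mono A '' U)) ↔ InterIrred U := by
  constructor
  · intro hirr V W hV hW hUVW
    have := hirr _ _ ⟨V, rfl⟩ ⟨W, rfl⟩ (by rw [span_mono_inf hV hW, hUVW])
    exact this.imp (span_mono_injOn_isUpperSet hU hV) (span_mono_injOn_isUpperSet hU hW)
  · intro hirr J K hJ hK hUJK
    obtain ⟨V, hV, rfl⟩ := isMonomialIdeal_iff_exists_isUpperSet.mp hJ
    obtain ⟨W, hW, rfl⟩ := isMonomialIdeal_iff_exists_isUpperSet.mp hK
    rw [span_mono_inf hV hW] at hUJK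
    have := hirr V W hV hW (span_mono_injOn_isUpperSet hU (hV.inter hW) hUJK)
    exact this.imp (fun h ↦ by rw [h]) (fun h ↦ by rw [h])

theorem isMonomialIdeal_Jideal (a : Fin d → ℝ≥0∞) (e : Fin d → Bool) :
    IsMonomialIdeal (Jideal A a e) :=
  ⟨cross a e, Jideal_eq_span_cross a e⟩

theorem mIrred_Jideal [Nontrivial A] (a : Fin d → ℝ≥0∞) (e : Fin d → Bool) :
    MIrred (Jideal A a e) := by
  rw [Jideal_eq_span_cross, mIrred_span_mono_iff (isUpperSet_cross a e)]
  exact interIrred_cross a e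

end Ideals

variable {A : Type*} [CommRing A] [Nontrivial A] {d : ℕ}

theorem stmt17_general (I : Ideal (SemiRng A d)) :
    (∃ (k : ℕ) (J : Fin k → Ideal (SemiRng A d)),
        (∀ t, IsMonomialIdeal (J t)) ∧ (∀ t, MIrred (J t)) ∧ I = ⨅ t, J t) ↔
      (∃ (k : ℕ) (a : Fin k → Fin d → ℝ≥0∞) (e : Fin k → Fin d → Bool),
        I = ⨆ t, Iideal A (a t) (e t)) := by
  constructor
  · rintro ⟨k, J, hmon, hirr, rfl⟩
    choose U hU hJU using fun t ↦ isMonomialIdeal_iff_exists_isUpperSet.mp (hmon t)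
    have hUirr (t : Fin k) : U t = univ ∨ ∃ a e, U t = cross a e :=
      ((mIrred_span_mono_iff (hU t)).mp (hJU t ▸ hirr t)).eq_univ_or_eq_cross (hU t)
    obtain ⟨m, b, f, hbf⟩ := exists_iInter_eq_iUnion_box hUirr
    refine ⟨m, b, f, ?_⟩
    simp only [hJU, iInf_span_mono hU, hbf, Iideal_eq_span_box, iSup_span_mono]
  · rintro ⟨k, a, e, rfl⟩
    obtain ⟨m, b, f, hbf⟩ := exists_iUnion_box_eq_iInter_cross a e
    refine ⟨m, fun s ↦ Jideal A (b s) (f s), fun s ↦ isMonomialIdeal_Jideal _ _,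
      fun s ↦ mIrred_Jideal _ _, ?_⟩
    simp only [Iideal_eq_span_box, Jideal_eq_span_cross, iSup_span_mono, hbf,
      iInf_span_mono fun s ↦ isUpperSet_cross (b s) (f s)]

theorem stmt17 (I : Ideal (SemiRng A d)) (hI : IsMonomialIdeal I) :
    (∃ (k : ℕ) (J : Fin k → Ideal (SemiRng A d)),
        (∀ t, IsMonomialIdeal (J t)) ∧ (∀ t, MIrred (J t)) ∧ I = ⨅ t, J t) ↔
      (∃ (k : ℕ) (a : Fin k → Fin d → ℝ≥0∞) (e : Fin k → Fin d → Bool),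
        I = ⨆ t, Iideal A (a t) (e t)) :=
  stmt17_general I
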